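/- In the group G = ℤ * ℤ² = ⟨a⟩ * ⟨b,c⟩ with its standard generating set {a,b,c}, for each j ≥ 1 the bi-infinite-word based geodesic ray β^j = b^j a a a a ⋯ (reading b^j then a^∞ from the identity in the Cayley graph) is a geodesic ray, and the geodesic ray α = a a a a ⋯ is 0-contracting (indeed its image is an isometrically embedded copy of [0,∞) in a tree-graded piece), while β^j is not D-contracting for any D < j/2 since the flat coset b-c-plane through b^j projects onto a segment of β^j of length j. -/

import Mathlib

/-!
`G = ⟨a⟩ * ⟨b, c⟩` is a free product, so every `g` has a gate `a ^ gate g` on the axis `⟨a⟩`: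
right multiplication by a generator changes `gate` only when both `g` and the product lie on the
axis. Hence every path from `g` to a point with another gate passes through `a ^ gate g`, which is
therefore the unique closest point of the axis. If two points of a ball had different projections
to `α`, a geodesic from the centre to one of them would pass through the larger of the two gates,
a point of `α` inside the ball. The geodesic claims and the lower bound for `β^j` come from
characters `G → ℤ` with values in `{-1, 0, 1}` on the generators, which are `1`-Lipschitz: the
`c`-coordinate shows that the ball of radius `j + 1` about `c ^ (j + 1)` misses `β^j`, while its
points `c ^ (j + 1)` and `b ^ j * c ^ (j + 1)` project to `β^j 0` and `β^j j`.
-/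

open Set

namespace ZFreeZsq

/-- The single relator `[b,c] = b c b⁻¹ c⁻¹` presenting `ℤ * ℤ² = ⟨a⟩ * ⟨b,c | [b,c]⟩`
on generators `a = 0`, `b = 1`, `c = 2`. -/
def rels : Set (FreeGroup (Fin 3)) :=
  {FreeGroup.of 1 * FreeGroup.of 2 * (FreeGroup.of 1)⁻¹ * (FreeGroup.of 2)⁻¹}

/-- The group `G = ℤ * ℤ²`. -/
abbrev G : Type := PresentedGroup rels

/-- The generator `a`. -/
def a : G := PresentedGroup.of 0

/-- The generator `b`. -/
def b : G := PresentedGroup.of 1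

/-- The word metric on `G` with respect to the generating set `{a, b, c}`:
the least length of a word in the generators and their inverses representing `g⁻¹h`. -/
noncomputable def wdist (g h : G) : ℕ :=
  sInf {n : ℕ | ∃ l : List (Fin 3 × Bool), l.length = n ∧
    g⁻¹ * h = (l.map fun p =>
      if p.2 then (PresentedGroup.of p.1 : G) else (PresentedGroup.of p.1 : G)⁻¹).prod}

/-- A (discrete) geodesic ray in the Cayley graph: `wdist (ρ m) (ρ n) = |m − n|`. -/
def IsGeodesicRayN (ρ : ℕ → G) : Prop :=
  ∀ m n : ℕ, wdist (ρ m) (ρ n) = Nat.dist m n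

/-- The parameters of closest-point projections of `x` onto the ray `ρ`. -/
def projParams (ρ : ℕ → G) (x : G) : Set ℕ :=
  {k | ∀ m : ℕ, wdist x (ρ k) ≤ wdist x (ρ m)}

/-- The ray `ρ` is `D`-contracting: every metric ball disjoint from the ray projects onto a
segment of the ray of length at most `2D`. -/
def IsContractingRay (D : ℝ) (ρ : ℕ → G) : Prop :=
  ∀ (x : G) (r : ℕ), (∀ k : ℕ, ¬ wdist x (ρ k) < r) →
    ∀ k ∈ {k : ℕ | ∃ y : G, wdist x y < r ∧ k ∈ projParams ρ y},
    ∀ l ∈ {k : ℕ | ∃ y : G, wdist x y < r ∧ k ∈ projParams ρ y},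
      |(k : ℝ) - (l : ℝ)| ≤ 2 * D

/-- The ray `α = a a a a ⋯`. -/
def αray : ℕ → G := fun k => a ^ k

/-- The ray `β^j = b^j a a a a ⋯`: first read `b^j`, then powers of `a`. -/
def βray (j : ℕ) : ℕ → G := fun k => if k ≤ j then b ^ k else b ^ j * a ^ (k - j)

end ZFreeZsq

namespace Monoid.CoprodI.Word

variable {ι : Type*} {M : ι → Type*} [∀ i, Monoid (M i)] [∀ i, DecidableEq (M i)]

lemma toList_rcons {i : ι} (p : Pair M i) :
    (rcons p).toList = if p.head = 1 then p.tail.toList else ⟨i, p.head⟩ :: p.tail.toList := by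
  unfold rcons
  split_ifs <;> rfl

lemma getLast?_rcons {i : ι} (p : Pair M i) (h : p.tail.toList ≠ []) :
    (rcons p).toList.getLast? = p.tail.toList.getLast? := by
  rw [toList_rcons]
  split_ifs
  · rfl
  · obtain ⟨l, l', hl⟩ := List.exists_cons_of_ne_nil h
    simp [hl, List.getLast?_cons]

variable [DecidableEq ι]

lemma toList_equiv_of {i : ι} (n : M i) :
    (equiv (of n)).toList = if n = 1 then [] else [⟨i, n⟩] := by
  change (of n • empty).toList = _
  rw [of_smul_def, equivPair_eq_of_fstIdx_ne (by simp [fstIdx]), toList_rcons]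
  simp

lemma getLast?_of_smul {i : ι} (m : M i) (w : Word M) :
    (of m • w).toList.getLast? = w.toList.getLast? ∨ ∃ n : M i, w.prod = of n := by
  have hw : rcons (equivPair i w) = w := (equivPair i).symm_apply_apply w
  by_cases ht : (equivPair i w).tail.toList = []
  · refine Or.inr ⟨(equivPair i w).head, ?_⟩
    conv_lhs => rw [← hw]
    rw [prod_rcons, show (equivPair i w).tail.prod = 1 by simp [prod, ht], mul_one]
  · left
    rw [of_smul_def]
    refine (getLast?_rcons (p := ⟨m * (equivPair i w).head, (equivPair i w).tail,
      (equivPair i w).fstIdx_ne⟩) ht).trans ?_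
    conv_rhs => rw [← hw]
    exact (getLast?_rcons _ ht).symm

end Monoid.CoprodI.Word

namespace ZFreeZsq

open Multiplicative Monoid Monoid.CoprodI

def letter (p : Fin 3 × Bool) : G :=
  if p.2 then (PresentedGroup.of p.1 : G) else (PresentedGroup.of p.1 : G)⁻¹

lemma letter_flip (p : Fin 3 × Bool) : letter (p.1, !p.2) = (letter p)⁻¹ := by
  rcases p with ⟨i, _ | _⟩ <;> simp [letter]

lemma wdist_eq_sInf (g h : G) :
    wdist g h =
      sInf {n | ∃ l : List (Fin 3 × Bool), l.length = n ∧ g * (l.map letter).prod = h} := by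
  simp only [wdist, ← inv_mul_eq_iff_eq_mul, eq_comm (a := g⁻¹ * h), inv_inv]
  rfl

lemma exists_word (g : G) : ∃ l : List (Fin 3 × Bool), (l.map letter).prod = g := by
  obtain ⟨x, rfl⟩ := PresentedGroup.mk_surjective rels g
  have hmk : PresentedGroup.mk rels = FreeGroup.lift (PresentedGroup.of (rels := rels)) :=
    FreeGroup.ext_hom _ _ fun _ => rfl
  refine ⟨x.toWord, ?_⟩
  conv_rhs => rw [← FreeGroup.mk_toWord (x := x), hmk, FreeGroup.lift_mk]
  congr 1
  exact List.map_congr_left fun ⟨i, s⟩ _ => by cases s <;> rfl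

lemma wdist_le_length {g h : G} {l : List (Fin 3 × Bool)} (hl : g * (l.map letter).prod = h) :
    wdist g h ≤ l.length := by
  rw [wdist_eq_sInf]
  exact Nat.sInf_le ⟨l, rfl, hl⟩

lemma exists_word_length_eq_wdist (g h : G) :
    ∃ l : List (Fin 3 × Bool), l.length = wdist g h ∧ g * (l.map letter).prod = h := by
  obtain ⟨l, hl⟩ := exists_word (g⁻¹ * h)
  rw [wdist_eq_sInf]
  exact Nat.sInf_mem (s := {n | ∃ l : List (Fin 3 × Bool), l.length = n ∧
    g * (l.map letter).prod = h}) ⟨l.length, l, rfl, by rw [hl, mul_inv_cancel_left]⟩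

@[simp] lemma wdist_self (g : G) : wdist g g = 0 :=
  Nat.le_zero.mp (wdist_le_length (l := []) (by simp))

lemma wdist_symm (g h : G) : wdist g h = wdist h g := by
  suffices ∀ g h : G, wdist h g ≤ wdist g h from le_antisymm (this h g) (this g h)
  intro g h
  obtain ⟨l, hlen, hl⟩ := exists_word_length_eq_wdist g h
  have hrev : h * (((l.map fun p => (p.1, !p.2)).reverse).map letter).prod = g := by
    have : ((l.map fun p => (p.1, !p.2)).reverse.map letter) =
        ((l.map letter).map (·⁻¹)).reverse := by
      simp [List.map_reverse, letter_flip]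
    rw [this, ← List.prod_inv_reverse, ← hl, mul_inv_cancel_right]
  simpa [hlen] using wdist_le_length hrev

lemma wdist_triangle (g h k : G) : wdist g k ≤ wdist g h + wdist h k := by
  obtain ⟨l₁, hlen₁, hl₁⟩ := exists_word_length_eq_wdist g h
  obtain ⟨l₂, hlen₂, hl₂⟩ := exists_word_length_eq_wdist h k
  rw [← hlen₁, ← hlen₂, ← List.length_append]
  exact wdist_le_length (by rw [List.map_append, List.prod_append, ← mul_assoc, hl₁, hl₂])

lemma wdist_mul_pow_le (g : G) (i : Fin 3) (n : ℕ) :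
    wdist g (g * PresentedGroup.of i ^ n) ≤ n := by
  simpa using wdist_le_length (g := g) (l := List.replicate n (i, true)) (by simp [letter])

lemma wdist_mul_zpow_le (g : G) (i : Fin 3) (t : ℤ) :
    wdist g (g * PresentedGroup.of i ^ t) ≤ t.natAbs := by
  obtain ⟨n, rfl | rfl⟩ := Int.eq_nat_or_neg t
  · simpa using wdist_mul_pow_le g i n
  · simpa using wdist_le_length (g := g) (l := List.replicate n (i, false)) (by simp [letter])

def c : G := PresentedGroup.of 2

lemma commute_b_c : Commute b c := by
  have h := PresentedGroup.one_of_mem (rels := rels) (Set.mem_singleton _)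
  simp only [map_mul, map_inv] at h
  exact mul_inv_eq_one.mp (mul_inv_eq_one.mp h)

def weight (w : Fin 3 → ℤ) : G →* Multiplicative ℤ :=
  PresentedGroup.toGroup (f := fun i => ofAdd (w i)) <| by
    rintro _ rfl
    simp only [map_mul, map_inv, FreeGroup.lift_apply_of]
    exact mul_inv_eq_one.mpr (mul_inv_cancel_comm _ _)

@[simp] lemma toAdd_weight_of (w : Fin 3 → ℤ) (i : Fin 3) :
    toAdd (weight w (PresentedGroup.of i)) = w i := by
  simp [weight, PresentedGroup.toGroup.of]

lemma abs_weight_list_prod_le {w : Fin 3 → ℤ} (hw : ∀ i, |w i| ≤ 1) (l : List (Fin 3 × Bool)) :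
    |toAdd (weight w (l.map letter).prod)| ≤ l.length := by
  induction l with
  | nil => simp
  | cons p l ih =>
    have hp : |toAdd (weight w (letter p))| ≤ 1 := by
      rcases p with ⟨i, _ | _⟩ <;> simpa [letter] using hw i
    simp only [List.map_cons, List.prod_cons, map_mul, toAdd_mul, List.length_cons, Nat.cast_succ]
    linarith [abs_add_le (toAdd (weight w (letter p))) (toAdd (weight w (l.map letter).prod))]

lemma abs_weight_le_wdist {w : Fin 3 → ℤ} (hw : ∀ i, |w i| ≤ 1) (g h : G) :
    |toAdd (weight w (g⁻¹ * h))| ≤ wdist g h := by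
  obtain ⟨l, hlen, hl⟩ := exists_word_length_eq_wdist g h
  rw [← hlen, ← hl, inv_mul_cancel_left]
  exact abs_weight_list_prod_le hw l

lemma isGeodesicRayN_of_step {ρ : ℕ → G} {w : Fin 3 → ℤ} (hw : ∀ i, |w i| ≤ 1)
    (hstep : ∀ k, ∃ i, ρ (k + 1) = ρ k * PresentedGroup.of i ∧ w i = 1) :
    IsGeodesicRayN ρ := by
  have hup : ∀ m d, wdist (ρ m) (ρ (m + d)) ≤ d := by
    intro m d
    induction d with
    | zero => simp
    | succ d ih =>
      obtain ⟨i, hi, -⟩ := hstep (m + d)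
      have h1 : wdist (ρ (m + d)) (ρ (m + d + 1)) ≤ 1 := by
        simpa [hi] using wdist_mul_pow_le (ρ (m + d)) i 1
      rw [← add_assoc]
      linarith [wdist_triangle (ρ m) (ρ (m + d)) (ρ (m + d + 1))]
  have hweight : ∀ m d, toAdd (weight w ((ρ m)⁻¹ * ρ (m + d))) = d := by
    intro m d
    induction d with
    | zero => simp
    | succ d ih =>
      obtain ⟨i, hi, hwi⟩ := hstep (m + d)
      rw [← add_assoc, hi, ← mul_assoc, map_mul, toAdd_mul, ih, toAdd_weight_of, hwi]
      push_cast
      ring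
  have hdist : ∀ m d, wdist (ρ m) (ρ (m + d)) = d := fun m d =>
    le_antisymm (hup m d) <| by
      have h := abs_weight_le_wdist hw (ρ m) (ρ (m + d))
      rw [hweight, Nat.abs_cast] at h
      exact_mod_cast h
  intro m n
  rcases le_total m n with h | h
  · obtain ⟨d, rfl⟩ := Nat.exists_eq_add_of_le h
    simp [hdist, Nat.dist]
  · obtain ⟨d, rfl⟩ := Nat.exists_eq_add_of_le h
    simp [wdist_symm, hdist, Nat.dist]

lemma isGeodesicRayN_αray : IsGeodesicRayN αray :=
  isGeodesicRayN_of_step (w := ![1, 0, 0]) (fun i => by fin_cases i <;> simp)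
    fun k => ⟨0, pow_succ a k, rfl⟩

lemma isGeodesicRayN_βray (j : ℕ) : IsGeodesicRayN (βray j) := by
  refine isGeodesicRayN_of_step (w := ![1, 1, 0]) (fun i => by fin_cases i <;> simp) fun k => ?_
  rcases lt_trichotomy k j with hk | rfl | hk
  · exact ⟨1, by simp [βray, hk.le, Nat.succ_le_of_lt hk, pow_succ, b], rfl⟩
  · exact ⟨0, by simp [βray, a], rfl⟩
  · refine ⟨0, ?_, rfl⟩
    simp [βray, hk.not_ge, (Nat.lt_succ_of_lt hk).not_ge, Nat.succ_sub hk.le, pow_succ, mul_assoc, a]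

lemma abs_weight_c_le_wdist_βray (j : ℕ) (y : G) (k : ℕ) :
    |toAdd (weight ![0, 0, 1] y)| ≤ wdist y (βray j k) := by
  have hβ : toAdd (weight ![0, 0, 1] (βray j k)) = 0 := by
    unfold βray
    split_ifs <;> simp [a, b]
  have h := abs_weight_le_wdist (w := ![0, 0, 1]) (fun i => by fin_cases i <;> simp) y (βray j k)
  rwa [map_mul, map_inv, toAdd_mul, toAdd_inv, hβ, add_zero, abs_neg] at h

lemma mem_projParams_βray {j : ℕ} {y : G} {k : ℕ}
    (hk : wdist y (βray j k) ≤ |toAdd (weight ![0, 0, 1] y)|) : k ∈ projParams (βray j) y :=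
  fun m => by exact_mod_cast hk.trans (abs_weight_c_le_wdist_βray j y m)

lemma not_isContractingRay_βray (j : ℕ) {D : ℝ} (hD : D < j / 2) :
    ¬ IsContractingRay D (βray j) := by
  intro hcon
  set N := j + 1
  have hx : |toAdd (weight ![0, 0, 1] (c ^ N))| = N := by simp [c]
  have hy : |toAdd (weight ![0, 0, 1] (b ^ j * c ^ N))| = N := by simp [b, c]
  have hdisj : ∀ k, ¬ wdist (c ^ N) (βray j k) < N := fun k hk => by
    have := abs_weight_c_le_wdist_βray j (c ^ N) k
    rw [hx] at this
    omega
  have h0 : 0 ∈ {k | ∃ y, wdist (c ^ N) y < N ∧ k ∈ projParams (βray j) y} := by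
    refine ⟨c ^ N, by simp [N], mem_projParams_βray ?_⟩
    rw [hx, wdist_symm]
    simpa [βray, c] using wdist_mul_pow_le 1 2 N
  have hj : j ∈ {k | ∃ y, wdist (c ^ N) y < N ∧ k ∈ projParams (βray j) y} := by
    refine ⟨b ^ j * c ^ N, ?_, mem_projParams_βray ?_⟩
    · rw [(commute_b_c.pow_pow j N).eq]
      exact (wdist_mul_pow_le (c ^ N) 1 j).trans_lt (Nat.lt_succ_self j)
    · rw [hy, wdist_symm]
      simpa [βray, c] using wdist_mul_pow_le (b ^ j) 2 N
  have := hcon (c ^ N) N hdisj 0 h0 j hj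
  rw [Nat.cast_zero, zero_sub, abs_neg, Nat.abs_cast] at this
  linarith

/-- The factors of `G ≅ ⟨a⟩ * ⟨b, c⟩`: `false` indexes `⟨a⟩ ≅ ℤ`, `true` indexes `⟨b, c⟩ ≅ ℤ²`. -/
abbrev Factor : Bool → Type
  | false => Multiplicative ℤ
  | true => Multiplicative ℤ × Multiplicative ℤ

instance : ∀ i, CommGroup (Factor i)
  | false => inferInstanceAs (CommGroup (Multiplicative ℤ))
  | true => inferInstanceAs (CommGroup (Multiplicative ℤ × Multiplicative ℤ))

instance : ∀ i, DecidableEq (Factor i)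
  | false => inferInstanceAs (DecidableEq (Multiplicative ℤ))
  | true => inferInstanceAs (DecidableEq (Multiplicative ℤ × Multiplicative ℤ))

def toCoprod : G →* CoprodI Factor :=
  PresentedGroup.toGroup (f := ![of (M := Factor) (i := false) (ofAdd 1),
    of (M := Factor) (i := true) (ofAdd 1, 1), of (M := Factor) (i := true) (1, ofAdd 1)]) <| by
    rintro _ rfl
    have h : Commute (of (M := Factor) (i := true) (ofAdd 1, 1))
        (of (M := Factor) (i := true) (1, ofAdd 1)) :=
      (Commute.all _ _).map of
    simp [h.eq]

def ofCoprod : CoprodI Factor →* G :=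
  lift fun
    | false => zpowersHom G a
    | true => (zpowersHom G b).noncommCoprod (zpowersHom G c) fun m n =>
        commute_b_c.zpow_zpow (toAdd m) (toAdd n)

lemma ofCoprod_toCoprod (g : G) : ofCoprod (toCoprod g) = g := by
  have h : ofCoprod.comp toCoprod = MonoidHom.id G := PresentedGroup.ext fun i => by
    fin_cases i <;> simp [toCoprod, ofCoprod, PresentedGroup.toGroup.of, a, b, c]
  exact DFunLike.congr_fun h g

def aExp : Option (Σ i, Factor i) → ℤ
  | some ⟨false, x⟩ => toAdd x
  | _ => 0

def lastAExp (g : G) : ℤ := aExp (Word.equiv (toCoprod g)).toList.getLast?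

lemma aExp_of_false (n : Factor false) : aExp (Word.equiv (of n)).toList.getLast? = toAdd n := by
  rw [Word.toList_equiv_of]
  split_ifs with h <;> simp [aExp, h]

lemma aExp_of_true (n : Factor true) : aExp (Word.equiv (of n)).toList.getLast? = 0 := by
  rw [Word.toList_equiv_of]
  split_ifs <;> simp [aExp]

lemma eq_a_zpow_of_toCoprod_eq {g : G} {n : Factor false} (h : toCoprod g = of n) :
    g = a ^ lastAExp g := by
  rw [lastAExp, h, aExp_of_false, ← ofCoprod_toCoprod g, h]
  simp [ofCoprod]

lemma toCoprod_letter (p : Fin 3 × Bool) : ∃ i, ∃ m : Factor i, toCoprod (letter p) = of m := by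
  rcases p with ⟨i, _ | _⟩ <;> fin_cases i <;> exact ⟨_, _, rfl⟩

lemma lastAExp_letter_mul {p : Fin 3 × Bool} {g : G} (h : lastAExp (letter p * g) ≠ lastAExp g) :
    g = a ^ lastAExp g ∧ letter p * g = a ^ lastAExp (letter p * g) := by
  obtain ⟨i, m, hm⟩ := toCoprod_letter p
  have hword : Word.equiv (toCoprod (letter p * g)) = of m • Word.equiv (toCoprod g) := by
    rw [map_mul, hm]
    exact mul_smul (of m) (toCoprod g) (Word.empty : Word Factor)
  rcases Word.getLast?_of_smul m (Word.equiv (toCoprod g)) with heq | ⟨n, hn⟩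
  · exact absurd (by rw [lastAExp, lastAExp, hword, heq]) h
  · have hg : toCoprod g = of n := (Word.equiv.symm_apply_apply (toCoprod g)).symm.trans hn
    have hpg : toCoprod (letter p * g) = of (m * n) := by rw [map_mul, hm, hg, map_mul]
    cases i
    · exact ⟨eq_a_zpow_of_toCoprod_eq hg, eq_a_zpow_of_toCoprod_eq hpg⟩
    · exact absurd (by rw [lastAExp, lastAExp, hg, hpg, aExp_of_true, aExp_of_true]) h

/-- `a ^ gate g` is where paths from `g` enter the axis `⟨a⟩`: the `a`-exponent of the first
syllable of `g`, read off the last syllable of `g⁻¹` because reduced words are built by left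
multiplication. -/
def gate (g : G) : ℤ := -lastAExp g⁻¹

lemma gate_a_zpow (k : ℤ) : gate (a ^ k) = k := by
  have h : toCoprod (a ^ k)⁻¹ = of (M := Factor) (i := false) (ofAdd 1 ^ (-k)) := by
    rw [← zpow_neg, map_zpow, map_zpow]
    rfl
  rw [gate, lastAExp, h, aExp_of_false]
  simp

lemma gate_mul_letter {g : G} {p : Fin 3 × Bool} (h : gate (g * letter p) ≠ gate g) :
    g = a ^ gate g ∧ g * letter p = a ^ gate (g * letter p) := by
  have hinv : (g * letter p)⁻¹ = letter (p.1, !p.2) * g⁻¹ := by rw [mul_inv_rev, letter_flip]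
  have hne : lastAExp (letter (p.1, !p.2) * g⁻¹) ≠ lastAExp g⁻¹ := by
    rw [← hinv]
    exact fun h' => h (by rw [gate, gate, h'])
  obtain ⟨h₁, h₂⟩ := lastAExp_letter_mul hne
  constructor
  · rw [gate, zpow_neg, ← h₁, inv_inv]
  · rw [gate, zpow_neg, hinv, ← h₂, ← hinv, inv_inv]

lemma exists_take_eq_a_zpow_gate (l : List (Fin 3 × Bool)) {g : G}
    (h : gate (g * (l.map letter).prod) ≠ gate g) :
    ∃ i, g * ((l.take i).map letter).prod = a ^ gate (g * (l.map letter).prod) := by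
  induction l generalizing g with
  | nil => simp at h
  | cons p l ih =>
    simp only [List.map_cons, List.prod_cons, ← mul_assoc] at h ⊢
    by_cases hl : gate (g * letter p * (l.map letter).prod) = gate (g * letter p)
    · refine ⟨1, ?_⟩
      rw [hl] at h ⊢
      simpa using (gate_mul_letter h).2
    · obtain ⟨i, hi⟩ := ih hl
      exact ⟨i + 1, by simpa [mul_assoc] using hi⟩

lemma wdist_add_wdist_a_zpow_gate {u w : G} (h : gate u ≠ gate w) :
    wdist u (a ^ gate w) + wdist (a ^ gate w) w = wdist u w := by
  refine le_antisymm ?_ (wdist_triangle u _ w)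
  obtain ⟨l, hlen, hl⟩ := exists_word_length_eq_wdist u w
  obtain ⟨i, hi⟩ := exists_take_eq_a_zpow_gate l (g := u) (by rw [hl]; exact h.symm)
  rw [hl] at hi
  have hdrop : a ^ gate w * ((l.drop i).map letter).prod = w := by
    rw [← hi, mul_assoc, ← List.prod_append, ← List.map_append, List.take_append_drop, hl]
  calc wdist u (a ^ gate w) + wdist (a ^ gate w) w
      ≤ (l.take i).length + (l.drop i).length :=
        add_le_add (wdist_le_length hi) (wdist_le_length hdrop)
    _ = wdist u w := by rw [← List.length_append, List.take_append_drop, hlen]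

lemma wdist_a_zpow (s t : ℤ) : wdist (a ^ s) (a ^ t) = (t - s).natAbs := by
  refine le_antisymm ?_ ?_
  · calc wdist (a ^ s) (a ^ t) = wdist (a ^ s) (a ^ s * a ^ (t - s)) := by
          rw [← zpow_add, add_sub_cancel]
      _ ≤ (t - s).natAbs := wdist_mul_zpow_le (a ^ s) 0 (t - s)
  · have h := abs_weight_le_wdist (w := ![1, 0, 0]) (fun i => by fin_cases i <;> simp)
      (a ^ s) (a ^ t)
    have hw : toAdd (weight ![1, 0, 0] ((a ^ s)⁻¹ * a ^ t)) = t - s := by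
      simp [a, neg_add_eq_sub]
    rw [hw, ← Int.natCast_natAbs] at h
    exact_mod_cast h

lemma wdist_a_zpow_eq (y : G) (t : ℤ) :
    wdist y (a ^ t) = wdist y (a ^ gate y) + (t - gate y).natAbs := by
  refine le_antisymm ?_ ?_
  · rw [← wdist_a_zpow]
    exact wdist_triangle _ _ _
  · by_cases ht : t = gate y
    · simp [ht]
    · have h := wdist_add_wdist_a_zpow_gate (u := a ^ t) (w := y) (by rwa [gate_a_zpow])
      rw [wdist_a_zpow, wdist_symm (a ^ gate y)] at h
      rw [wdist_symm y (a ^ t), ← h]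
      omega

lemma coe_eq_max_gate_of_mem_projParams {y : G} {k : ℕ} (hk : k ∈ projParams αray y) :
    (k : ℤ) = max (gate y) 0 := by
  have h := hk (gate y).toNat
  rw [αray, αray, ← zpow_natCast, ← zpow_natCast, wdist_a_zpow_eq y k,
    wdist_a_zpow_eq y (gate y).toNat] at h
  omega

lemma wdist_a_zpow_gate_le_max (x : G) {y y' : G} (h : gate y ≠ gate y') :
    wdist x (a ^ gate y') ≤ max (wdist x y) (wdist x y') := by
  by_cases hx : gate x = gate y'
  · have := wdist_add_wdist_a_zpow_gate (u := y) (w := x) (by rwa [hx])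
    rw [← hx, wdist_symm x, wdist_symm x y]
    exact le_max_of_le_left (by omega)
  · have := wdist_add_wdist_a_zpow_gate hx
    exact le_max_of_le_right (by omega)

lemma isContractingRay_αray : IsContractingRay 0 αray := by
  rintro x r hdisj k ⟨y, hy, hk⟩ l ⟨y', hy', hl⟩
  have hk := coe_eq_max_gate_of_mem_projParams hk
  have hl := coe_eq_max_gate_of_mem_projParams hl
  suffices k = l by simp [this]
  by_contra hkl
  have hne : gate y ≠ gate y' := fun h => hkl (by omega)
  obtain ⟨t, ht, hxt⟩ : ∃ t : ℤ, 0 ≤ t ∧ wdist x (a ^ t) < r := by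
    rcases hne.lt_or_gt with hlt | hlt
    · exact ⟨gate y', by omega, (wdist_a_zpow_gate_le_max x hne).trans_lt (max_lt hy hy')⟩
    · exact ⟨gate y, by omega, (wdist_a_zpow_gate_le_max x hne.symm).trans_lt (max_lt hy' hy)⟩
  apply hdisj t.toNat
  rwa [αray, ← zpow_natCast, Int.toNat_of_nonneg ht]

theorem zFreeZsq_contracting_general (j : ℕ) :
    IsGeodesicRayN αray ∧
    IsGeodesicRayN (βray j) ∧
    IsContractingRay 0 αray ∧
    ∀ D : ℝ, D < (j : ℝ) / 2 → ¬ IsContractingRay D (βray j) :=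
  ⟨isGeodesicRayN_αray, isGeodesicRayN_βray j, isContractingRay_αray,
    fun _ hD => not_isContractingRay_βray j hD⟩

/-- In `ℤ * ℤ² = ⟨a⟩ * ⟨b,c⟩` with the word metric on generators `{a,b,c}`: for each
`j ≥ 1`, `β^j = b^j a a a ⋯` is a geodesic ray, `α = a a a ⋯` is a geodesic ray which is
`0`-contracting, while `β^j` is not `D`-contracting for any `D < j/2` (the flat coset
`b`-`c`-plane through `b^j` projects onto a segment of `β^j` of length `j`). -/
theorem zFreeZsq_contracting (j : ℕ) (hj : 1 ≤ j) :
    IsGeodesicRayN αray ∧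
    IsGeodesicRayN (βray j) ∧
    IsContractingRay 0 αray ∧
    ∀ D : ℝ, D < (j : ℝ) / 2 → ¬ IsContractingRay D (βray j) :=
  zFreeZsq_contracting_general j

end ZFreeZsq
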